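/- arXiv:1105.2415 — 2 statements merged into one kernel-verified Lean document; each statement's English description precedes it below -/
import Mathlib

section
/- Let P be an n-dimensional lattice polytope. If n is odd and μ(P) > (n+1)/2, or if n is even and μ(P) ≥ (n+2)/2, then P is a nontrivial Cayley polytope, i.e., P has lattice width one. -/
open scoped BigOperators Pointwise

noncomputable section

/-- Pairing `⟨a, x⟩ = ∑ aⱼ xⱼ` of an integer linear functional with a real point. -/
def ipair {n : ℕ} (a : Fin n → ℤ) (x : Fin n → ℝ) : ℝ := ∑ j, (a j : ℝ) * x j

/-- An integer vector is primitive if it is nonzero and not a nontrivial integer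
multiple of another integer vector. -/
def IsPrimitive {n : ℕ} (a : Fin n → ℤ) : Prop :=
  a ≠ 0 ∧ ∀ (k : ℤ) (b : Fin n → ℤ), a = k • b → IsUnit k

/-- The set of integer (lattice) points of `ℝⁿ`. -/
def IntPts (n : ℕ) : Set (Fin n → ℝ) := Set.range (fun z : Fin n → ℤ => fun j => (z j : ℝ))

/-- The dimension of a subset of `ℝⁿ` (the dimension of its affine hull). -/
def setDim {n : ℕ} (S : Set (Fin n → ℝ)) : ℕ := Module.finrank ℝ (vectorSpan ℝ S)

/-- An irredundant facet description `P = {x : A x ≥ b}` of an `n`-dimensional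
rational polytope: the rows `aᵢ` of `A` are primitive integer vectors, the right hand
sides are rational, `P` is bounded and `n`-dimensional, every inequality defines a facet
(a face of dimension `n-1`), and no inequality is repeated. -/
structure PolyDesc (n m : ℕ) : Type where
  hm : 0 < m
  A : Fin m → Fin n → ℤ
  b : Fin m → ℚ
  prim : ∀ i, IsPrimitive (A i)
  bounded : Bornology.IsBounded {x : Fin n → ℝ | ∀ i, (b i : ℝ) ≤ ipair (A i) x}
  fulldim : setDim {x : Fin n → ℝ | ∀ i, (b i : ℝ) ≤ ipair (A i) x} = n
  facet_dim : ∀ i, setDim {x : Fin n → ℝ |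
      (∀ j, (b j : ℝ) ≤ ipair (A j) x) ∧ ipair (A i) x = (b i : ℝ)} + 1 = n
  irredundant : Function.Injective (fun i => (A i, b i))

namespace PolyDesc

variable {n m : ℕ} (D : PolyDesc n m)

/-- The polytope `P` itself. -/
def pts : Set (Fin n → ℝ) := {x | ∀ i, (D.b i : ℝ) ≤ ipair (D.A i) x}

/-- Lattice distance `d_{Fᵢ}(x) = ⟨aᵢ, x⟩ - bᵢ` from (the hyperplane spanned by)
the `i`-th facet. -/
def dF (i : Fin m) (x : Fin n → ℝ) : ℝ := ipair (D.A i) x - (D.b i : ℝ)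

/-- Lattice distance `d_P(x) = minᵢ d_{Fᵢ}(x)` from the boundary of `P`. -/
def dist (x : Fin n → ℝ) : ℝ :=
  Finset.univ.inf'
    (Finset.univ_nonempty_iff.mpr (Fin.pos_iff_nonempty.mp D.hm))
    (fun i => D.dF i x)

/-- The adjoint polytope `P⁽ˢ⁾ = {x : d_P(x) ≥ s}`. -/
def adj (s : ℝ) : Set (Fin n → ℝ) := {x | s ≤ D.dist x}

/-- The `i`-th facet `Fᵢ` of `P`. -/
def facet (i : Fin m) : Set (Fin n → ℝ) := {x ∈ D.pts | ipair (D.A i) x = (D.b i : ℝ)}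

/-- The set `{s > 0 : P⁽ˢ⁾ ≠ ∅}`, whose supremum is `μ(P)⁻¹`. -/
def qcdInvSet : Set ℝ := {s : ℝ | 0 < s ∧ (D.adj s).Nonempty}

/-- `μ(P)⁻¹ = sup {s > 0 : P⁽ˢ⁾ ≠ ∅}`. -/
def qcdInv : ℝ := sSup D.qcdInvSet

/-- The ℚ-codegree `μ(P) = (sup {s > 0 : P⁽ˢ⁾ ≠ ∅})⁻¹`. -/
def qcd : ℝ := D.qcdInv⁻¹

/-- The core `core(P) = P^{(1/μ(P))}`. -/
def core : Set (Fin n → ℝ) := D.adj D.qcdInv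

/-- The codegree `cd(P) = min {k ∈ ℕ, k ≥ 1 : int(kP) ∩ ℤⁿ ≠ ∅}`. -/
def codeg : ℕ := sInf {k : ℕ | 0 < k ∧
  ∃ z : Fin n → ℤ, (fun j => (z j : ℝ)) ∈ interior ((k : ℝ) • D.pts)}

end PolyDesc

/-- The face of `S` on which the linear functional `u` is maximized. -/
def argFace {n : ℕ} (S : Set (Fin n → ℝ)) (u : Fin n → ℝ) : Set (Fin n → ℝ) :=
  {x ∈ S | ∀ y ∈ S, ∑ j, u j * y j ≤ ∑ j, u j * x j}

/-- `S` and `T` have the same normal fan: two linear functionals lie in the same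
(relatively open) cone of the normal fan of `S`, i.e. are maximized on the same face
of `S`, iff the same holds for `T`. -/
def SameNormalFan {n : ℕ} (S T : Set (Fin n → ℝ)) : Prop :=
  ∀ u v : Fin n → ℝ, (argFace S u = argFace S v ↔ argFace T u = argFace T v)

/-- The normal fan of `S` refines the normal fan of `T`. -/
def RefinesNormalFan {n : ℕ} (S T : Set (Fin n → ℝ)) : Prop :=
  ∀ u v : Fin n → ℝ, argFace S u = argFace S v → argFace T u = argFace T v

namespace PolyDesc
variable {n m : ℕ} (D : PolyDesc n m)

/-- `{s > 0 : N(P⁽ˢ⁾) = N(P)}`, whose supremum is `τ(P)⁻¹`. -/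
def nefInvSet : Set ℝ := {s : ℝ | 0 < s ∧ SameNormalFan (D.adj s) D.pts}

/-- `τ(P)⁻¹ = sup {s > 0 : N(P⁽ˢ⁾) = N(P)}`. -/
def nefInv : ℝ := sSup D.nefInvSet

/-- The nef value `τ(P)`. -/
def nefVal : ℝ := D.nefInv⁻¹

/-- The set of inequalities active at `x`; the normal cone of the minimal face of `P`
containing `x` is generated by `{aᵢ : i ∈ active x}`, and all cones of the normal fan
of `P` arise in this way. -/
def active (x : Fin n → ℝ) : Set (Fin m) := {i | ipair (D.A i) x = (D.b i : ℝ)}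

/-- The normal cone at the vertex `v` is ℚ-Gorenstein of index `r`, witnessed by the
primitive lattice point `u = u_σ` with `⟨aᵢ, u⟩ = r` for all active `i`. -/
def VertexQG (v : Fin n → ℝ) (u : Fin n → ℤ) (r : ℤ) : Prop :=
  IsPrimitive u ∧ 0 < r ∧ ∀ i ∈ D.active v, (∑ j, D.A i j * u j) = r

/-- The normal fan of `P` is ℚ-Gorenstein: every maximal cone (normal cone of a
vertex, i.e. of an extreme point) is ℚ-Gorenstein. -/
def QGorenstein : Prop := ∀ v ∈ Set.extremePoints ℝ D.pts, ∃ u r, D.VertexQG v u r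

end PolyDesc

/-- The point `v(s) = v + (s/r_σ) • u_σ`. -/
def vmove {n : ℕ} (v : Fin n → ℝ) (s : ℝ) (u : Fin n → ℤ) (r : ℤ) : Fin n → ℝ :=
  v + (s / (r : ℝ)) • (fun j => ((u j : ℝ)))

/-- The height of a point `y` in the cone generated by `{aᵢ : i ∈ I}`:
`ht(y) = max {∑ λᵢ : λᵢ ≥ 0, ∑ λᵢ aᵢ = y}`. -/
def coneHeight {n m : ℕ} (D : PolyDesc n m) (I : Set (Fin m)) (y : Fin n → ℝ) : ℝ :=
  sSup {t : ℝ | ∃ c : Fin m → ℝ, (∀ i, 0 ≤ c i) ∧ (∀ i ∉ I, c i = 0) ∧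
    (y = ∑ i, c i • (fun j => ((D.A i j : ℝ)))) ∧ t = ∑ i, c i}

/-- `P` is α-canonical: for every cone `σ` of the normal fan of `P` (the normal cone
of the minimal face containing a point `x ∈ P`, generated by `{aᵢ : i ∈ active x}`),
every nonzero lattice point of `σ` has height at least `α`. -/
def AlphaCanonical {n m : ℕ} (D : PolyDesc n m) (α : ℝ) : Prop :=
  ∀ x ∈ D.pts, ∀ z : Fin n → ℤ, z ≠ 0 →
    (∃ c : Fin m → ℝ, (∀ i, 0 ≤ c i) ∧ (∀ i ∉ D.active x, c i = 0) ∧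
      ((fun j => ((z j : ℝ))) = ∑ i, c i • (fun j => ((D.A i j : ℝ))))) →
    α ≤ coneHeight D (D.active x) (fun j => ((z j : ℝ)))

/-- `P` is a lattice polytope: the convex hull of finitely many integer points. -/
def IsLatticePoly {n : ℕ} (P : Set (Fin n → ℝ)) : Prop :=
  ∃ V : Finset (Fin n → ℤ),
    P = convexHull ℝ ((fun z : Fin n → ℤ => fun j => ((z j : ℝ))) '' (V : Set (Fin n → ℤ)))

/-- The `i`-th standard basis vector of `ℝᵗ`. -/
def stdBasisVec (t : ℕ) (i : Fin t) : Fin t → ℝ := fun j => if j = i then 1 else 0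

/-- The marking vectors of a Cayley sum: `0, e₁, …, e_t ∈ ℝᵗ`. -/
def cayleyVec (t : ℕ) : Fin (t + 1) → (Fin t → ℝ) :=
  fun j => if h : (j : ℕ) = 0 then 0 else stdBasisVec t ⟨(j : ℕ) - 1, by have := j.isLt; omega⟩

/-- The Cayley sum `Q₀ * ⋯ * Q_t = conv((Q₀ × {0}) ∪ (Q₁ × {e₁}) ∪ ⋯ ∪ (Q_t × {e_t}))`. -/
def cayleySum {k t : ℕ} (Q : Fin (t + 1) → Set (Fin k → ℝ)) :
    Set ((Fin k → ℝ) × (Fin t → ℝ)) :=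
  convexHull ℝ (⋃ j, (Q j) ×ˢ ({cayleyVec t j} : Set (Fin t → ℝ)))

/-- `P ⊆ ℝⁿ` is a Cayley polytope `P₀ * ⋯ * P_t` of length `t+1` of lattice polytopes
`Pⱼ ⊆ ℝᵏ` with `k + t = n`: some affine lattice isomorphism `ℤⁿ ≅ ℤᵏ × ℤᵗ`
identifies `P` with such a Cayley sum. -/
def IsCayley {n : ℕ} (P : Set (Fin n → ℝ)) (k t : ℕ) : Prop :=
  k + t = n ∧
  ∃ Q : Fin (t + 1) → Finset (Fin k → ℤ), (∀ j, (Q j).Nonempty) ∧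
  ∃ f : (Fin n → ℝ) ≃ᵃ[ℝ] (Fin k → ℝ) × (Fin t → ℝ),
    f '' IntPts n = (IntPts k) ×ˢ (IntPts t) ∧
    f '' P = cayleySum (fun j =>
      convexHull ℝ ((fun z : Fin k → ℤ => fun i => ((z i : ℝ))) '' (Q j : Set (Fin k → ℤ))))

/-- The unimodular simplex `Δₙ = conv(0, e₁, …, eₙ)`. -/
def unimodSimplex (n : ℕ) : Set (Fin n → ℝ) :=
  convexHull ℝ (insert (0 : Fin n → ℝ) (Set.range (stdBasisVec n)))

/-- Two subsets of `ℝⁿ` are unimodularly equivalent: an affine lattice automorphism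
maps one onto the other. -/
def UnimodEquiv {n : ℕ} (P P' : Set (Fin n → ℝ)) : Prop :=
  ∃ f : (Fin n → ℝ) ≃ᵃ[ℝ] (Fin n → ℝ), f '' IntPts n = IntPts n ∧ f '' P = P'

/-- The codegree `cd(P) = min {k ∈ ℕ, k ≥ 1 : int(kP) ∩ ℤⁿ ≠ ∅}` of a polytope given
as a set. -/
def codegS {n : ℕ} (P : Set (Fin n → ℝ)) : ℕ :=
  sInf {k : ℕ | 0 < k ∧ ∃ z : Fin n → ℤ, (fun j => (z j : ℝ)) ∈ interior ((k : ℝ) • P)}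

/-- `P` has lattice width one: some nonzero integer linear functional has minimum `c`
and maximum `c + 1` on `P`. -/
def HasLatticeWidthOne {n : ℕ} (P : Set (Fin n → ℝ)) : Prop :=
  ∃ u : Fin n → ℤ, u ≠ 0 ∧ ∃ c : ℤ,
    (∀ x ∈ P, (c : ℝ) ≤ ipair u x ∧ ipair u x ≤ (c : ℝ) + 1) ∧
    (∃ x ∈ P, ipair u x = (c : ℝ)) ∧ (∃ x ∈ P, ipair u x = (c : ℝ) + 1)

/-- `P` is a lattice pyramid: for some primitive `u`, `P` is the convex hull of a base
lying in the lattice hyperplane `{⟨u, ·⟩ = c}` and an apex at lattice distance one from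
it (this is equivalent to being unimodularly equivalent to
`conv((Q × {0}) ∪ {(0, …, 0, 1)})` for an `(n-1)`-dimensional lattice polytope `Q`). -/
def IsLatticePyramid {n : ℕ} (P : Set (Fin n → ℝ)) : Prop :=
  ∃ u : Fin n → ℤ, IsPrimitive u ∧ ∃ c : ℤ, ∃ apex ∈ P,
    ipair u apex = (c : ℝ) + 1 ∧
    P = convexHull ℝ ({x ∈ P | ipair u x = (c : ℝ)} ∪ {apex})

/-- `F` is a facet of `S`: an exposed face of dimension `dim S - 1`. -/
def IsFacetOf {n : ℕ} (F S : Set (Fin n → ℝ)) : Prop :=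
  IsExposed ℝ S F ∧ F.Nonempty ∧ setDim F + 1 = setDim S

/-! Let `x` maximize the lattice distance `d_P`, so that `s := d_P(x) ≤ μ(P)⁻¹ < 2/(n+1)`.
At a maximum of a minimum of affine functions, `0` is a convex combination of the gradients
of the active ones; by Carathéodory, `0 = ∑ wₖ aᵢₖ` with at most `n + 1` positive weights summing
to `1`. Then `∑ wₖ d_{Fᵢₖ}` is constant on `P`, equal to its value `s` at `x`, and a weight
`wₖ ≥ 1/(n+1) > s/2` forces `d_{Fᵢₖ} < 2` on `P`. The integral functional `aᵢₖ` therefore takes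
at most two consecutive integer values on the vertices of `P`, and exactly two because `P` is
full-dimensional. -/

open Filter Topology Matrix

section LatticeWidth

variable {n : ℕ}

lemma ipair_eq_dotProduct (a : Fin n → ℤ) (x : Fin n → ℝ) :
    ipair a x = (fun j => (a j : ℝ)) ⬝ᵥ x := rfl

lemma continuous_ipair (a : Fin n → ℤ) : Continuous (ipair a) :=
  continuous_const.dotProduct continuous_id

lemma ipair_intCast (u z : Fin n → ℤ) :
    ipair u (fun j => (z j : ℝ)) = ((∑ j, u j * z j : ℤ) : ℝ) := by
  simp [ipair]

lemma setDim_lt_of_forall_ipair_eq {S : Set (Fin n → ℝ)} {u : Fin n → ℤ} (hu : u ≠ 0) {c : ℝ}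
    (hS : ∀ x ∈ S, ipair u x = c) : setDim S < n := by
  set φ := dotProductBilin ℝ ℝ (fun j => (u j : ℝ))
  have hspan : vectorSpan ℝ S ≤ LinearMap.ker φ := by
    rw [vectorSpan_def, Submodule.span_le]
    rintro _ ⟨x, hx, y, hy, rfl⟩
    simp [φ, dotProduct_sub, ← ipair_eq_dotProduct, hS x hx, hS y hy]
  have hker : LinearMap.ker φ ≠ ⊤ := by
    obtain ⟨j, hj⟩ := Function.ne_iff.mp hu
    refine fun htop => hj ?_
    have : φ (Pi.single j 1) = 0 := LinearMap.mem_ker.mp (htop ▸ Submodule.mem_top)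
    simpa [φ] using this
  calc setDim S ≤ Module.finrank ℝ (LinearMap.ker φ) := Submodule.finrank_mono hspan
    _ < Module.finrank ℝ (Fin n → ℝ) := Submodule.finrank_lt hker
    _ = n := Module.finrank_fin_fun ℝ

lemma IsLatticePoly.exists_ipair_min_max {P : Set (Fin n → ℝ)} (hP : IsLatticePoly P)
    (hne : P.Nonempty) (u : Fin n → ℤ) :
    ∃ z₀ z₁ : Fin n → ℤ, (∀ x ∈ P, ipair u (fun j => (z₀ j : ℝ)) ≤ ipair u x) ∧
      (∀ x ∈ P, ipair u x ≤ ipair u (fun j => (z₁ j : ℝ))) ∧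
      (fun j => (z₀ j : ℝ)) ∈ P ∧ (fun j => (z₁ j : ℝ)) ∈ P := by
  obtain ⟨V, rfl⟩ := hP
  have hV : V.Nonempty := by simpa using hne
  set φ := dotProductBilin ℝ ℝ (fun j => (u j : ℝ))
  obtain ⟨z₀, hz₀, hmin⟩ := V.exists_min_image (fun z => ipair u (fun j => (z j : ℝ))) hV
  obtain ⟨z₁, hz₁, hmax⟩ := V.exists_max_image (fun z => ipair u (fun j => (z j : ℝ))) hV
  refine ⟨z₀, z₁, fun x hx => ?_, fun x hx => ?_, subset_convexHull ℝ _ ⟨z₀, hz₀, rfl⟩,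
    subset_convexHull ℝ _ ⟨z₁, hz₁, rfl⟩⟩
  · obtain ⟨_, ⟨z, hz, rfl⟩, hle⟩ :=
      (φ.concaveOn convex_univ).exists_le_of_mem_convexHull (Set.subset_univ _) hx
    exact (hmin z hz).trans hle
  · obtain ⟨_, ⟨z, hz, rfl⟩, hle⟩ :=
      (φ.convexOn convex_univ).exists_ge_of_mem_convexHull (Set.subset_univ _) hx
    exact hle.trans (hmax z hz)

theorem hasLatticeWidthOne_of_lt_two {P : Set (Fin n → ℝ)} (hP : IsLatticePoly P)
    {u : Fin n → ℤ} (hu : u ≠ 0) (hdim : setDim P = n) {b : ℝ}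
    (hlow : ∀ x ∈ P, b ≤ ipair u x) (hup : ∀ x ∈ P, ipair u x < b + 2) :
    HasLatticeWidthOne P := by
  have hne : P.Nonempty := by
    by_contra hempty
    exact (setDim_lt_of_forall_ipair_eq hu (c := 0) fun x hx => absurd ⟨x, hx⟩ hempty).ne hdim
  obtain ⟨z₀, z₁, hmin, hmax, hz₀, hz₁⟩ := hP.exists_ipair_min_max hne u
  set c₀ := ∑ j, u j * z₀ j
  set c₁ := ∑ j, u j * z₁ j
  have e₀ : ipair u (fun j => (z₀ j : ℝ)) = c₀ := ipair_intCast u z₀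
  have e₁ : ipair u (fun j => (z₁ j : ℝ)) = c₁ := ipair_intCast u z₁
  rw [e₀] at hmin
  rw [e₁] at hmax
  have hc₁_lt : c₁ < c₀ + 2 := by
    have : (c₁ : ℝ) < c₀ + 2 := by linarith [e₁ ▸ hup _ hz₁, e₀ ▸ hlow _ hz₀]
    exact_mod_cast this
  have hc₀_ne : c₀ ≠ c₁ := by
    intro heq
    refine (setDim_lt_of_forall_ipair_eq hu (c := c₀) fun x hx => ?_).ne hdim
    exact le_antisymm (heq ▸ hmax x hx) (hmin x hx)
  have hlt : c₀ < c₁ := lt_of_le_of_ne (by exact_mod_cast e₁ ▸ hmin _ hz₁) hc₀_ne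
  have hc₁ : (c₁ : ℝ) = c₀ + 1 := by exact_mod_cast (by omega : c₁ = c₀ + 1)
  exact ⟨u, hu, c₀, fun x hx => ⟨hmin x hx, hc₁ ▸ hmax x hx⟩, ⟨_, hz₀, e₀⟩, ⟨_, hz₁, e₁.trans hc₁⟩⟩

end LatticeWidth

namespace PolyDesc

variable {n m : ℕ} (D : PolyDesc n m)

def normal (i : Fin m) : Fin n → ℝ := fun j => (D.A i j : ℝ)

lemma dF_eq (i : Fin m) (x : Fin n → ℝ) : D.dF i x = D.normal i ⬝ᵥ x - D.b i := rfl

lemma dF_add_smul (i : Fin m) (x d : Fin n → ℝ) (t : ℝ) :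
    D.dF i (x + t • d) = D.dF i x + t * (D.normal i ⬝ᵥ d) := by
  rw [dF_eq, dF_eq, dotProduct_add, dotProduct_smul, smul_eq_mul]
  ring

lemma sum_mul_dF {ι : Type*} [Fintype ι] (w : ι → ℝ) (g : ι → Fin m) (x : Fin n → ℝ) :
    ∑ k, w k * D.dF (g k) x = (∑ k, w k • D.normal (g k)) ⬝ᵥ x - ∑ k, w k * (D.b (g k) : ℝ) := by
  simp only [dF_eq, sum_dotProduct, smul_dotProduct, smul_eq_mul, mul_sub, Finset.sum_sub_distrib]

lemma dist_le_dF (x : Fin n → ℝ) (i : Fin m) : D.dist x ≤ D.dF i x :=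
  Finset.inf'_le _ (Finset.mem_univ i)

lemma lt_dist_iff {s : ℝ} {x : Fin n → ℝ} : s < D.dist x ↔ ∀ i, s < D.dF i x := by
  simp [dist, Finset.lt_inf'_iff]

lemma mem_pts_iff_dist_nonneg {x : Fin n → ℝ} : x ∈ D.pts ↔ 0 ≤ D.dist x := by
  simp [pts, dist, Finset.le_inf'_iff, dF]

lemma continuous_dist : Continuous D.dist :=
  continuous_iff_continuousAt.2 fun _ =>
    ContinuousAt.finset_inf'_apply _ fun i _ =>
      ((continuous_ipair (D.A i)).sub continuous_const).continuousAt

lemma dim_pos (D : PolyDesc n m) : 0 < n := by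
  refine Nat.pos_of_ne_zero fun hn => (D.prim ⟨0, D.hm⟩).1 ?_
  subst hn
  exact Subsingleton.elim _ _

lemma nonempty_pts : D.pts.Nonempty := by
  rw [Set.nonempty_iff_ne_empty]
  intro he
  have := D.fulldim
  rw [← pts, he, setDim, vectorSpan_empty, finrank_bot] at this
  exact D.dim_pos.ne this

lemma isCompact_pts : IsCompact D.pts := by
  refine Metric.isCompact_of_isClosed_isBounded ?_ D.bounded
  have : D.pts = {x | 0 ≤ D.dist x} := Set.ext fun _ => D.mem_pts_iff_dist_nonneg
  exact this ▸ isClosed_le continuous_const D.continuous_dist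

lemma exists_forall_dist_le : ∃ x, ∀ y, D.dist y ≤ D.dist x := by
  obtain ⟨x, hx, hmax⟩ :=
    D.isCompact_pts.exists_isMaxOn D.nonempty_pts D.continuous_dist.continuousOn
  refine ⟨x, fun y => ?_⟩
  by_cases hy : y ∈ D.pts
  · exact hmax hy
  · rw [mem_pts_iff_dist_nonneg] at hx hy
    linarith

lemma dist_le_qcdInv {x : Fin n → ℝ} (hx : ∀ y, D.dist y ≤ D.dist x) :
    D.dist x ≤ D.qcdInv := by
  rcases le_or_gt (D.dist x) 0 with h | h
  · exact h.trans (Real.sSup_nonneg fun t ht => ht.1.le)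
  · refine le_csSup ⟨D.dist x, ?_⟩ ⟨h, x, le_rfl (a := D.dist x)⟩
    rintro t ⟨-, y, hy⟩
    exact hy.trans (hx y)

lemma zero_mem_convexHull_of_isLocalMax {x : Fin n → ℝ} (hx : IsLocalMax D.dist x) :
    (0 : Fin n → ℝ) ∈ convexHull ℝ (D.normal '' {i | D.dF i x = D.dist x}) := by
  set T := D.normal '' {i | D.dF i x = D.dist x}
  by_contra h0
  obtain ⟨f, c, hf0, hfT⟩ := geometric_hahn_banach_point_closed (convex_convexHull ℝ T)
    ((Set.toFinite T).isCompact_convexHull (𝕜 := ℝ)).isClosed h0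
  set d := (dotProductEquiv ℝ (Fin n)).symm f.toLinearMap
  have hd : ∀ i, D.dF i x = D.dist x → 0 < D.normal i ⬝ᵥ d := by
    intro i hi
    have hf : f (D.normal i) = d ⬝ᵥ D.normal i :=
      (LinearMap.congr_fun ((dotProductEquiv ℝ (Fin n)).apply_symm_apply _) _).symm
    rw [dotProduct_comm, ← hf]
    exact (map_zero f ▸ hf0).trans (hfT _ (subset_convexHull ℝ T ⟨i, hi, rfl⟩))
  have hup : ∀ᶠ t in 𝓝[>] (0 : ℝ), D.dist x < D.dist (x + t • d) := by
    simp only [lt_dist_iff, dF_add_smul, eventually_all]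
    intro i
    rcases (D.dist_le_dF x i).eq_or_lt with hi | hi
    · filter_upwards [self_mem_nhdsWithin] with t (ht : 0 < t)
      exact hi ▸ lt_add_of_pos_right _ (mul_pos ht (hd i hi.symm))
    · have : Tendsto (fun t => D.dF i x + t * (D.normal i ⬝ᵥ d)) (𝓝[>] 0) (𝓝 (D.dF i x)) :=
        ((continuous_const.add (continuous_id.mul continuous_const)).tendsto' 0 _
          (by simp)).mono_left nhdsWithin_le_nhds
      exact this.eventually (lt_mem_nhds hi)
  have hdown : ∀ᶠ t in 𝓝[>] (0 : ℝ), D.dist (x + t • d) ≤ D.dist x :=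
    (((continuous_const.add (continuous_id.smul continuous_const)).tendsto' 0 x
      (by simp)).mono_left nhdsWithin_le_nhds).eventually hx
  obtain ⟨t, hlt, hle⟩ := (hup.and hdown).exists
  exact hlt.not_ge hle

lemma exists_dF_lt_two {x : Fin n → ℝ}
    (h0 : (0 : Fin n → ℝ) ∈ convexHull ℝ (D.normal '' {i | D.dF i x = D.dist x}))
    (hx : D.dist x < 2 / (n + 1)) : ∃ i, ∀ y ∈ D.pts, D.dF i y < 2 := by
  obtain ⟨ι, _, a, w, ha, hind, hwpos, hw1, hw0⟩ := eq_pos_convex_span_of_mem_convexHull h0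
  choose g hg using fun k => ha ⟨k, rfl⟩
  have hcard : Fintype.card ι ≤ n + 1 := by
    have := (vectorSpan ℝ (Set.range a)).finrank_le
    rw [Module.finrank_fin_fun] at this
    linarith [hind.card_le_finrank_succ]
  have hsum : ∑ k, w k • D.normal (g k) = 0 := by simpa only [(hg _).2] using hw0
  have hconst : ∀ y, ∑ k, w k * D.dF (g k) y = D.dist x := by
    have hy : ∀ y, ∑ k, w k * D.dF (g k) y = -∑ k, w k * (D.b (g k) : ℝ) := by
      simp [sum_mul_dF, hsum]
    intro y
    rw [hy, ← hy x, ← one_mul (D.dist x), ← hw1, Finset.sum_mul]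
    exact Finset.sum_congr rfl fun k _ => by rw [(hg k).1]
  obtain ⟨k, -, hk⟩ := Finset.exists_le_of_sum_le
    (Finset.nonempty_of_sum_ne_zero (hw1 ▸ one_ne_zero)) (f := fun _ => ((n : ℝ) + 1)⁻¹)
    (g := w) <| by
      rw [hw1, Finset.sum_const, Finset.card_univ, nsmul_eq_mul]
      rw [← div_eq_mul_inv, div_le_one (by positivity)]
      exact_mod_cast hcard
  refine ⟨g k, fun y hy => lt_of_mul_lt_mul_left ?_ (hwpos k).le⟩
  calc w k * D.dF (g k) y ≤ D.dist x :=
        hconst y ▸ Finset.single_le_sum (f := fun l => w l * D.dF (g l) y)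
          (fun l _ => mul_nonneg (hwpos l).le (sub_nonneg.2 (hy _))) (Finset.mem_univ k)
    _ < 2 / (n + 1) := hx
    _ ≤ w k * 2 := by rw [div_eq_mul_inv, mul_comm]; gcongr

end PolyDesc

/-- Let `P` be an `n`-dimensional lattice polytope. If `n` is odd
and `μ(P) > (n+1)/2`, or `n` is even and `μ(P) ≥ (n+2)/2`, then `P` is a nontrivial
Cayley polytope, i.e. `P` has lattice width one. -/
theorem statement16 {n m : ℕ} (D : PolyDesc n m) (hlat : IsLatticePoly D.pts)
    (h : (Odd n ∧ ((n : ℝ) + 1) / 2 < D.qcd) ∨ (Even n ∧ ((n : ℝ) + 2) / 2 ≤ D.qcd)) :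
    HasLatticeWidthOne D.pts := by
  have hμ : ((n : ℝ) + 1) / 2 < D.qcd := by
    rcases h with ⟨-, h⟩ | ⟨-, h⟩
    · exact h
    · exact lt_of_lt_of_le (by linarith) h
  have hq : D.qcdInv < 2 / (n + 1) := by
    have hpos : 0 < D.qcdInv := inv_pos.mp (lt_trans (by positivity) hμ)
    rw [PolyDesc.qcd, lt_inv_comm₀ (by positivity) hpos, inv_div] at hμ
    exact hμ
  obtain ⟨x, hx⟩ := D.exists_forall_dist_le
  obtain ⟨i, hi⟩ := D.exists_dF_lt_two
    (D.zero_mem_convexHull_of_isLocalMax (IsMaxOn.isLocalMax (fun y _ => hx y) univ_mem))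
    ((D.dist_le_qcdInv hx).trans_lt hq)
  exact hasLatticeWidthOne_of_lt_two hlat (D.prim i).1 D.fulldim (fun y hy => hy i)
    (fun y hy => sub_lt_iff_lt_add'.mp (hi y hy))

end
end

section
/- Let P ⊆ ℝ^n be an n-dimensional rational simplex with facets F_0,…,F_n and opposite vertices v_0,…,v_n, and let a_i := d_{F_i}(v_i) be the lattice distance of v_i from its opposite facet F_i. Then τ(P) = μ(P) = Σ_{i=0}^{n} 1/a_i. -/
open scoped BigOperators Pointwise

noncomputable section

/-!
In barycentric coordinates `x = ∑ wᵢ vᵢ` one has `d_{Fᵢ}(x) = wᵢ aᵢ`, so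
`∑ᵢ d_{Fᵢ}(x) / aᵢ = 1` everywhere. Hence `P⁽ˢ⁾ = ∅` for `s > t := (∑ᵢ 1/aᵢ)⁻¹`, while the
point with barycentric coordinates `t / aᵢ` is at lattice distance `t` from every facet.
Centred at that point, `P⁽ˢ⁾` is the homothetic copy of `P` with ratio `(t - s) / t` for
`s < t`, so it has the same normal fan as `P`; thus both suprema equal `t`.
-/

theorem csSup_eq_of_Ioo_subset_of_subset_Iic {α : Type*} [ConditionallyCompleteLinearOrder α]
    [DenselyOrdered α] {A : Set α} {a t : α} (hat : a < t)
    (hlow : Set.Ioo a t ⊆ A) (hup : A ⊆ Set.Iic t) : sSup A = t := by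
  have hne : (Set.Ioo a t).Nonempty := Set.nonempty_Ioo.mpr hat
  refine le_antisymm (csSup_le (hne.mono hlow) hup) ?_
  calc t = sSup (Set.Ioo a t) := (csSup_Ioo hat).symm
    _ ≤ sSup A := csSup_le_csSup ⟨t, hup⟩ hne hlow

section NormalFan

variable {n : ℕ}

theorem argFace_image_homothety (S : Set (Fin n → ℝ)) (c : Fin n → ℝ) {r : ℝ} (hr : 0 < r)
    (u : Fin n → ℝ) :
    argFace (AffineMap.homothety c r '' S) u = AffineMap.homothety c r '' argFace S u := by
  have hpair : ∀ x, ∑ j, u j * AffineMap.homothety c r x j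
      = r * ∑ j, u j * x j + (1 - r) * ∑ j, u j * c j := by
    intro x
    simp only [AffineMap.homothety_apply, vsub_eq_sub, vadd_eq_add, Pi.add_apply,
      Pi.smul_apply, Pi.sub_apply, smul_eq_mul, Finset.mul_sum, ← Finset.sum_add_distrib]
    exact Finset.sum_congr rfl fun j _ => by ring
  ext y
  constructor
  · rintro ⟨⟨x, hx, rfl⟩, hmax⟩
    refine ⟨x, ⟨hx, fun z hz => ?_⟩, rfl⟩
    have h := hmax _ ⟨z, hz, rfl⟩
    rw [hpair, hpair] at h
    exact le_of_mul_le_mul_left (by linarith) hr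
  · rintro ⟨x, ⟨hx, hmax⟩, rfl⟩
    refine ⟨⟨x, hx, rfl⟩, ?_⟩
    rintro _ ⟨z, hz, rfl⟩
    rw [hpair, hpair]
    nlinarith [hmax z hz]

theorem sameNormalFan_image_homothety (S : Set (Fin n → ℝ)) (c : Fin n → ℝ) {r : ℝ}
    (hr : 0 < r) : SameNormalFan (AffineMap.homothety c r '' S) S := by
  intro u w
  rw [argFace_image_homothety S c hr, argFace_image_homothety S c hr]
  exact (Set.image_injective.mpr (AffineMap.homothety_injective c hr.ne')).eq_iff

theorem subsingleton_of_sameNormalFan_empty {T : Set (Fin n → ℝ)}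
    (h : SameNormalFan ∅ T) : T.Subsingleton := by
  have hface : ∀ u, argFace T u = T := fun u => by
    have hempty : ∀ w, argFace (∅ : Set (Fin n → ℝ)) w = ∅ := fun w => by simp [argFace]
    have h0 : argFace T 0 = T := by ext x; simp [argFace]
    exact ((h u 0).mp (by rw [hempty, hempty])).trans h0
  intro x hx y hy
  funext k
  have hcoord : ∀ z : Fin n → ℝ, ∑ j, (Pi.single k 1 : Fin n → ℝ) j * z j = z k := fun z => by
    simp [Pi.single_apply]
  have hxy := ((hface (Pi.single k 1)).symm ▸ hy : y ∈ argFace T _).2 x hx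
  have hyx := ((hface (Pi.single k 1)).symm ▸ hx : x ∈ argFace T _).2 y hy
  rw [hcoord, hcoord] at hxy hyx
  exact le_antisymm hxy hyx

theorem SameNormalFan.nonempty {S T : Set (Fin n → ℝ)} (h : SameNormalFan S T)
    (hT : T.Nontrivial) : S.Nonempty := by
  by_contra hS
  rw [Set.not_nonempty_iff_eq_empty] at hS
  subst hS
  exact hT.not_subsingleton (subsingleton_of_sameNormalFan_empty h)

end NormalFan

def ipairLinear {n : ℕ} (a : Fin n → ℤ) : (Fin n → ℝ) →ₗ[ℝ] ℝ where
  toFun := ipair a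
  map_add' x y := by simp only [ipair, Pi.add_apply, mul_add, Finset.sum_add_distrib]
  map_smul' c x := by
    simp only [ipair, Pi.smul_apply, smul_eq_mul, RingHom.id_apply, Finset.mul_sum]
    exact Finset.sum_congr rfl fun j _ => by ring

namespace PolyDesc

variable {n m : ℕ} (D : PolyDesc n m)

def dFAffine (i : Fin m) : (Fin n → ℝ) →ᵃ[ℝ] ℝ :=
  (ipairLinear (D.A i)).toAffineMap - AffineMap.const ℝ (Fin n → ℝ) (D.b i : ℝ)

@[simp]
theorem coe_dFAffine (i : Fin m) : ⇑(D.dFAffine i) = D.dF i := rfl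

theorem mem_pts_iff {x : Fin n → ℝ} : x ∈ D.pts ↔ ∀ i, 0 ≤ D.dF i x := by
  simp only [pts, dF, Set.mem_ofPred_eq, sub_nonneg]

theorem mem_adj_iff {s : ℝ} {x : Fin n → ℝ} : x ∈ D.adj s ↔ ∀ i, s ≤ D.dF i x := by
  simp only [adj, dist, Set.mem_ofPred_eq, Finset.le_inf'_iff, Finset.mem_univ, true_implies]

theorem pts_nontrivial : D.pts.Nontrivial := by
  refine Set.not_subsingleton_iff.mp fun hsub => ?_
  have hzero : setDim D.pts = 0 := by
    rw [setDim, vectorSpan_of_subsingleton ℝ hsub, finrank_bot]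
  have hfull : setDim D.pts = n := D.fulldim
  have hfacet := D.facet_dim ⟨0, D.hm⟩
  omega

theorem dF_sum_smul {ι : Type*} [Fintype ι] (i : Fin m) (w : ι → ℝ) (x : ι → Fin n → ℝ)
    (hw : ∑ k, w k = 1) : D.dF i (∑ k, w k • x k) = ∑ k, w k * D.dF i (x k) := by
  have h := Finset.univ.map_affineCombination x w hw (D.dFAffine i)
  rwa [Finset.affineCombination_eq_linear_combination _ _ _ hw,
    Finset.affineCombination_eq_linear_combination _ _ _ (by simpa using hw)] at h

theorem dF_homothety (i : Fin m) (c x : Fin n → ℝ) (r : ℝ) :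
    D.dF i (AffineMap.homothety c r x) = r * (D.dF i x - D.dF i c) + D.dF i c := by
  simpa [AffineMap.homothety_eq_lineMap, AffineMap.lineMap_apply_module', mul_sub]
    using (D.dFAffine i).apply_lineMap c x r

theorem adj_eq_image_homothety {x₀ : Fin n → ℝ} {t s : ℝ} (hx₀ : ∀ i, D.dF i x₀ = t)
    (ht : 0 < t) (hst : s < t) :
    D.adj s = AffineMap.homothety x₀ ((t - s) / t) '' D.pts := by
  set r := (t - s) / t
  have hr : 0 < r := div_pos (by linarith) ht
  have hrt : r * t = t - s := div_mul_cancel₀ _ ht.ne'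
  ext y
  constructor
  · intro hy
    refine ⟨AffineMap.homothety x₀ r⁻¹ y, D.mem_pts_iff.mpr fun i => ?_, ?_⟩
    · have hyi := (D.mem_adj_iff.mp hy) i
      rw [dF_homothety, hx₀]
      have : r⁻¹ * (D.dF i y - t) + t = r⁻¹ * (D.dF i y - s) := by
        field_simp
        linarith
      rw [this]
      exact mul_nonneg (inv_nonneg.mpr hr.le) (by linarith)
    · rw [← AffineMap.comp_apply, ← AffineMap.homothety_mul, mul_inv_cancel₀ hr.ne',
        AffineMap.homothety_one, AffineMap.id_apply]
  · rintro ⟨x, hx, rfl⟩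
    refine D.mem_adj_iff.mpr fun i => ?_
    rw [dF_homothety, hx₀]
    nlinarith [(D.mem_pts_iff.mp hx) i]

theorem sameNormalFan_adj {x₀ : Fin n → ℝ} {t s : ℝ} (hx₀ : ∀ i, D.dF i x₀ = t)
    (ht : 0 < t) (hst : s < t) : SameNormalFan (D.adj s) D.pts :=
  D.adj_eq_image_homothety hx₀ ht hst ▸
    sameNormalFan_image_homothety _ _ (div_pos (sub_pos.mpr hst) ht)

variable {v : Fin m → Fin n → ℝ}

theorem dF_sum_smul_of_opposite (hopp : ∀ i j, i ≠ j → D.dF j (v i) = 0)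
    (w : Fin m → ℝ) (hw : ∑ i, w i = 1) (j : Fin m) :
    D.dF j (∑ i, w i • v i) = w j * D.dF j (v j) := by
  rw [D.dF_sum_smul j w v hw]
  exact Finset.sum_eq_single j (fun i _ hij => by rw [hopp i j hij, mul_zero])
    (fun hj => absurd (Finset.mem_univ j) hj)

theorem dF_vertex_pos (hsimplex : D.pts = convexHull ℝ (Set.range v))
    (hopp : ∀ i j, i ≠ j → D.dF j (v i) = 0) (i : Fin m) : 0 < D.dF i (v i) := by
  have hvP : v i ∈ D.pts := hsimplex ▸ subset_convexHull ℝ _ ⟨i, rfl⟩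
  refine (D.mem_pts_iff.mp hvP i).lt_of_ne fun hzero => ?_
  -- otherwise `P` lies in the hyperplane of `Fᵢ`, so `Fᵢ = P` is not of codimension one
  have hsub : D.pts ⊆ {x | D.dF i x = 0} := by
    rw [hsimplex]
    refine convexHull_min ?_ ((convex_singleton 0).affine_preimage (D.dFAffine i))
    rintro _ ⟨j, rfl⟩
    by_cases hji : j = i
    · exact hji ▸ hzero.symm
    · exact hopp j i hji
  have hfacet : {x : Fin n → ℝ | (∀ j, (D.b j : ℝ) ≤ ipair (D.A j) x) ∧
      ipair (D.A i) x = (D.b i : ℝ)} = D.pts :=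
    Set.sep_eq_self_iff_mem_true.mpr fun x hx => sub_eq_zero.mp (hsub hx)
  have := D.facet_dim i
  rw [hfacet, pts, D.fulldim] at this
  omega

theorem sum_inv_dF_vertex_pos (hsimplex : D.pts = convexHull ℝ (Set.range v))
    (hopp : ∀ i j, i ≠ j → D.dF j (v i) = 0) : 0 < ∑ i, (D.dF i (v i))⁻¹ :=
  Finset.sum_pos (fun i _ => inv_pos.mpr (D.dF_vertex_pos hsimplex hopp i))
    ⟨⟨0, D.hm⟩, Finset.mem_univ _⟩

theorem exists_sum_smul_eq (hsimplex : D.pts = convexHull ℝ (Set.range v))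
    (x : Fin n → ℝ) : ∃ w : Fin m → ℝ, ∑ i, w i = 1 ∧ x = ∑ i, w i • v i := by
  have hspan : affineSpan ℝ (Set.range v) = ⊤ := by
    have hne : (Set.range v).Nonempty := Set.range_nonempty_iff_nonempty.mpr ⟨⟨0, D.hm⟩⟩
    rw [AffineSubspace.affineSpan_eq_top_iff_vectorSpan_eq_top_of_nonempty ℝ _ _ hne]
    apply Submodule.eq_top_of_finrank_eq
    have hdim : setDim (convexHull ℝ (Set.range v)) = n := hsimplex ▸ D.fulldim
    rw [setDim, ← direction_affineSpan, affineSpan_convexHull, direction_affineSpan] at hdim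
    rw [hdim, Module.finrank_fin_fun]
  obtain ⟨w, hw, hxw⟩ := eq_affineCombination_of_mem_affineSpan_of_fintype
    (hspan ▸ AffineSubspace.mem_top ℝ _ x : x ∈ affineSpan ℝ (Set.range v))
  exact ⟨w, hw, by rw [hxw, Finset.affineCombination_eq_linear_combination _ _ _ hw]⟩

theorem sum_dF_div_dF_vertex (hsimplex : D.pts = convexHull ℝ (Set.range v))
    (hopp : ∀ i j, i ≠ j → D.dF j (v i) = 0) (x : Fin n → ℝ) :
    ∑ i, D.dF i x / D.dF i (v i) = 1 := by
  obtain ⟨w, hw, rfl⟩ := D.exists_sum_smul_eq hsimplex x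
  simp_rw [D.dF_sum_smul_of_opposite hopp w hw,
    mul_div_cancel_right₀ _ (D.dF_vertex_pos hsimplex hopp _).ne', hw]

theorem le_inv_sum_inv_dF_vertex (hsimplex : D.pts = convexHull ℝ (Set.range v))
    (hopp : ∀ i j, i ≠ j → D.dF j (v i) = 0) {s : ℝ} {x : Fin n → ℝ} (hx : x ∈ D.adj s) :
    s ≤ (∑ i, (D.dF i (v i))⁻¹)⁻¹ := by
  have ha := D.dF_vertex_pos hsimplex hopp
  have hS := D.sum_inv_dF_vertex_pos hsimplex hopp
  rw [← one_div, le_div_iff₀ hS]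
  calc s * ∑ i, (D.dF i (v i))⁻¹ = ∑ i, s / D.dF i (v i) := by
        simp only [Finset.mul_sum, div_eq_mul_inv]
    _ ≤ ∑ i, D.dF i x / D.dF i (v i) := Finset.sum_le_sum fun i _ =>
        div_le_div_of_nonneg_right (D.mem_adj_iff.mp hx i) (ha i).le
    _ = 1 := D.sum_dF_div_dF_vertex hsimplex hopp x

theorem exists_forall_dF_eq (hsimplex : D.pts = convexHull ℝ (Set.range v))
    (hopp : ∀ i j, i ≠ j → D.dF j (v i) = 0) :
    ∃ x₀, ∀ j, D.dF j x₀ = (∑ i, (D.dF i (v i))⁻¹)⁻¹ := by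
  set t := (∑ i, (D.dF i (v i))⁻¹)⁻¹
  have ha := D.dF_vertex_pos hsimplex hopp
  have hS := D.sum_inv_dF_vertex_pos hsimplex hopp
  have hw : ∑ i, t * (D.dF i (v i))⁻¹ = 1 := by rw [← Finset.mul_sum, inv_mul_cancel₀ hS.ne']
  refine ⟨∑ i, (t * (D.dF i (v i))⁻¹) • v i, fun j => ?_⟩
  rw [D.dF_sum_smul_of_opposite hopp _ hw, mul_assoc, inv_mul_cancel₀ (ha j).ne', mul_one]

end PolyDesc

/-- Let `P ⊆ ℝⁿ` be an `n`-dimensional rational simplex with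
facets `F₀, …, Fₙ` and opposite vertices `v₀, …, vₙ` (so `vᵢ` lies on every facet
except `Fᵢ`), and let `aᵢ = d_{Fᵢ}(vᵢ)` be the lattice distance of `vᵢ` from `Fᵢ`.
Then `τ(P) = μ(P) = ∑ᵢ 1/aᵢ`. -/
theorem statement18 {n : ℕ} (D : PolyDesc n (n + 1))
    (v : Fin (n + 1) → (Fin n → ℝ))
    (hsimplex : D.pts = convexHull ℝ (Set.range v))
    (hopp : ∀ i j : Fin (n + 1), i ≠ j → D.dF j (v i) = 0) :
    D.nefVal = ∑ i, (D.dF i (v i))⁻¹ ∧ D.qcd = ∑ i, (D.dF i (v i))⁻¹ := by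
  set t := (∑ i, (D.dF i (v i))⁻¹)⁻¹ with ht_def
  obtain ⟨x₀, hx₀⟩ := D.exists_forall_dF_eq hsimplex hopp
  have ht : 0 < t := inv_pos.mpr (D.sum_inv_dF_vertex_pos hsimplex hopp)
  have hqcdInv : D.qcdInv = t :=
    IsGreatest.csSup_eq ⟨⟨ht, x₀, D.mem_adj_iff.mpr fun j => (hx₀ j).ge⟩,
      fun s ⟨_, y, hy⟩ => D.le_inv_sum_inv_dF_vertex hsimplex hopp hy⟩
  have hnefInv : D.nefInv = t :=
    csSup_eq_of_Ioo_subset_of_subset_Iic ht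
      (fun s hs => ⟨hs.1, D.sameNormalFan_adj hx₀ ht hs.2⟩)
      (fun s hs => D.le_inv_sum_inv_dF_vertex hsimplex hopp (hs.2.nonempty D.pts_nontrivial).some_mem)
  rw [PolyDesc.nefVal, PolyDesc.qcd, hnefInv, hqcdInv, ht_def, inv_inv]
  exact ⟨rfl, rfl⟩

end
end
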